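/- arXiv:2311.16459 — 2 statements merged into one kernel-verified Lean document; each statement's English description precedes it below -/
import Mathlib

section
/- Let F: ℝ^d → ℝ be convex, H-smooth, with ∇F(w) ≠ 0 at a point w. Suppose at w the agent is predicted non-defecting: F(w) - η‖∇F(w)‖ > ε + δ. Then for any update direction g with ‖g‖ ≤ 1 and η ≤ √(δ/(2H)), we have F(w + ηg) > ε, i.e., the agent does not defect after the update. -/
open RealInnerProductSpace

theorem sub_norm_mul_norm_le_of_subgradient {E : Type*} [NormedAddCommGroup E]
    [InnerProductSpace ℝ E] {F : E → ℝ} {w s : E} (hs : ∀ u, F w + ⟪s, u - w⟫ ≤ F u) (v : E) :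
    F w - ‖s‖ * ‖v‖ ≤ F (w + v) :=
  calc F w - ‖s‖ * ‖v‖ ≤ F w + ⟪s, v⟫ := by
        linarith [neg_le_of_abs_le (abs_real_inner_le_norm s v)]
    _ = F w + ⟪s, (w + v) - w⟫ := by rw [add_sub_cancel_left]
    _ ≤ F (w + v) := hs (w + v)

theorem stmt_3_general {d : ℕ} (F : EuclideanSpace ℝ (Fin d) → ℝ)
    (gF : EuclideanSpace ℝ (Fin d) → EuclideanSpace ℝ (Fin d))
    (ε δ η : ℝ) (hδ : 0 < δ) (hη : 0 < η)
    (hconv : ∀ u v, F v + ⟪gF v, u - v⟫ ≤ F u)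
    (w : EuclideanSpace ℝ (Fin d))
    (hnd : F w - η * ‖gF w‖ > ε + δ)
    (g : EuclideanSpace ℝ (Fin d)) (hg : ‖g‖ ≤ 1) :
    F (w + η • g) > ε := by
  have hupdate : ‖η • g‖ ≤ η := by
    rw [norm_smul, Real.norm_of_nonneg hη.le]
    exact mul_le_of_le_one_right hη.le hg
  have hdescent := sub_norm_mul_norm_le_of_subgradient (fun u => hconv u w) (η • g)
  linarith [mul_le_mul_of_nonneg_left hupdate (norm_nonneg (gF w))]

/-- a predicted non-defecting agent does not defect after any update
of bounded norm, provided η ≤ √(δ/(2H)). -/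
theorem stmt_3 {d : ℕ} (F : EuclideanSpace ℝ (Fin d) → ℝ)
    (gF : EuclideanSpace ℝ (Fin d) → EuclideanSpace ℝ (Fin d))
    (H ε δ η : ℝ) (hH : 0 < H) (hδ : 0 < δ) (hδε : δ ≤ ε) (hη : 0 < η)
    (hconv : ∀ u v, F v + ⟪gF v, u - v⟫ ≤ F u)
    (hlip : ∀ u v, ‖gF u - gF v‖ ≤ H * ‖u - v‖)
    (w : EuclideanSpace ℝ (Fin d)) (hgw : gF w ≠ 0)
    (hnd : F w - η * ‖gF w‖ > ε + δ)
    (g : EuclideanSpace ℝ (Fin d)) (hg : ‖g‖ ≤ 1)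
    (hstep : η ≤ Real.sqrt (δ / (2 * H))) :
    F (w + η • g) > ε :=
  stmt_3_general F gF ε δ η hδ hη hconv w hnd g hg
end

section
/- Let F₁, ..., F_M: ℝ^d → ℝ be convex and H-smooth, F = (1/M)∑ₘ Fₘ. Let D ⊔ ND = [M] be a partition, F_{ND} = ∑_{m ∈ ND} ∇Fₘ summed gradient at w, P the orthogonal complement of span{∇Fₙ(w) : n ∈ D}, and suppose 0 < ‖Π_P(∇F_{ND}(w))‖ < 1. If g = -Π_P(∇F_{ND}(w)) and η ≤ 1/(MH), then F(w + ηg) ≤ F(w) - (η/(2M))‖Π_P(∇F_{ND}(w))‖². -/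
/-!
The H-smoothness upper bound, applied to each `Fₘ` along the step `-η p` and summed, bounds the
new average loss by the old one minus `(η / M) ⟪∑ₘ ∇Fₘ(w), p⟫` plus `H η² ‖p‖² / 2`.
Since `p` is orthogonal to every `∇Fₙ(w)` with `n ∈ D` and is the orthogonal projection of
`∑_{m ∉ D} ∇Fₘ(w)`, that inner product is `‖p‖²`, and `η M H ≤ 1` makes the quadratic term at most
half of the linear gain.
-/

open RealInnerProductSpace

section InnerProductSpace

variable {E : Type*} [NormedAddCommGroup E] [InnerProductSpace ℝ E]

theorem real_inner_orthogonalProjectionOnto_self (K : Submodule ℝ E) [K.HasOrthogonalProjection]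
    (x : E) : ⟪x, (K.orthogonalProjectionOnto x : E)⟫ = ‖K.orthogonalProjectionOnto x‖ ^ 2 := by
  rw [← K.inner_orthogonalProjectionOnto_eq_of_mem_right, Submodule.coe_inner,
    real_inner_self_eq_norm_sq, Submodule.coe_norm]

theorem inner_sum_orthogonalProjectionOnto_sum_compl {ι : Type*} [Fintype ι] [DecidableEq ι]
    (K : Submodule ℝ E) [K.HasOrthogonalProjection] (v : ι → E) (D : Finset ι)
    (hD : ∀ i ∈ D, v i ∈ Kᗮ) :
    ⟪∑ i, v i, (K.orthogonalProjectionOnto (∑ i ∈ Dᶜ, v i) : E)⟫ =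
      ‖K.orthogonalProjectionOnto (∑ i ∈ Dᶜ, v i)‖ ^ 2 := by
  have hD_zero : ∀ i ∈ D, ⟪v i, (K.orthogonalProjectionOnto (∑ i ∈ Dᶜ, v i) : E)⟫ = 0 :=
    fun i hi => Submodule.inner_left_of_mem_orthogonal (Submodule.coe_mem _) (hD i hi)
  rw [← Finset.sum_add_sum_compl D, inner_add_left, sum_inner, Finset.sum_eq_zero hD_zero,
    zero_add, real_inner_orthogonalProjectionOnto_self]

theorem le_sub_inner_add_of_smooth {f : E → ℝ} {g v : E} {H : ℝ}
    (hsmooth : ∀ u, f u ≤ f v + ⟪g, u - v⟫ + H / 2 * ‖u - v‖ ^ 2) (η : ℝ) (p : E) :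
    f (v + η • (-p)) ≤ f v - η * ⟪g, p⟫ + H / 2 * η ^ 2 * ‖p‖ ^ 2 := by
  have hstep : v + η • (-p) - v = (-η) • p := by rw [add_sub_cancel_left, smul_neg, neg_smul]
  have h := hsmooth (v + η • (-p))
  rw [hstep, inner_smul_right, norm_smul, mul_pow, Real.norm_eq_abs, sq_abs, neg_sq] at h
  linarith

theorem sum_le_sum_sub_of_smooth {ι : Type*} [Fintype ι] {F : ι → E → ℝ} {g : ι → E} {v p : E}
    {H η : ℝ} (hsmooth : ∀ i u, F i u ≤ F i v + ⟪g i, u - v⟫ + H / 2 * ‖u - v‖ ^ 2)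
    (hη : 0 ≤ η) (hηH : η * (Fintype.card ι * H) ≤ 1) (hinner : ⟪∑ i, g i, p⟫ = ‖p‖ ^ 2) :
    ∑ i, F i (v + η • (-p)) ≤ ∑ i, F i v - η / 2 * ‖p‖ ^ 2 := by
  have hsum : ∑ i, F i (v + η • (-p)) ≤
      ∑ i, F i v - η * ‖p‖ ^ 2 + Fintype.card ι * (H / 2 * η ^ 2 * ‖p‖ ^ 2) := by
    calc ∑ i, F i (v + η • (-p))
        ≤ ∑ i, (F i v - η * ⟪g i, p⟫ + H / 2 * η ^ 2 * ‖p‖ ^ 2) :=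
          Finset.sum_le_sum fun i _ => le_sub_inner_add_of_smooth (hsmooth i) η p
      _ = ∑ i, F i v - η * ‖p‖ ^ 2 + Fintype.card ι * (H / 2 * η ^ 2 * ‖p‖ ^ 2) := by
          rw [Finset.sum_add_distrib, Finset.sum_sub_distrib, ← Finset.mul_sum, ← sum_inner,
            hinner, Finset.sum_const, Finset.card_univ, nsmul_eq_mul]
  have hquad : Fintype.card ι * (H / 2 * η ^ 2 * ‖p‖ ^ 2) ≤ η / 2 * ‖p‖ ^ 2 := by
    have := mul_le_mul_of_nonneg_right hηH (mul_nonneg hη (sq_nonneg ‖p‖))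
    nlinarith
  linarith

end InnerProductSpace

theorem mul_le_one_of_le_one_div {η a : ℝ} (hη : 0 ≤ η) (h : η ≤ 1 / a) : η * a ≤ 1 := by
  rcases le_or_gt a 0 with ha | ha
  · nlinarith
  · rwa [← le_div_iff₀ ha]

theorem stmt_7_general {d M : ℕ}
    (F : Fin M → EuclideanSpace ℝ (Fin d) → ℝ)
    (gF : Fin M → EuclideanSpace ℝ (Fin d) → EuclideanSpace ℝ (Fin d))
    (H η : ℝ) (hη : 0 < η) (hηM : η ≤ 1 / (M * H))
    (hsmooth : ∀ m u v, F m u ≤ F m v + ⟪gF m v, u - v⟫ + H / 2 * ‖u - v‖ ^ 2)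
    (w : EuclideanSpace ℝ (Fin d)) (D : Finset (Fin M))
    (P : Submodule ℝ (EuclideanSpace ℝ (Fin d)))
    (hP : P = (Submodule.span ℝ ((fun n => gF n w) '' (D : Set (Fin M))))ᗮ)
    (p : EuclideanSpace ℝ (Fin d))
    (hp : p = (Submodule.orthogonalProjectionOnto P (∑ m ∈ Dᶜ, gF m w) : EuclideanSpace ℝ (Fin d))) :
    (M : ℝ)⁻¹ * ∑ m, F m (w + η • (-p)) ≤
      (M : ℝ)⁻¹ * ∑ m, F m w - η / (2 * M) * ‖p‖ ^ 2 := by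
  have hD : ∀ n ∈ D, gF n w ∈ Pᗮ := fun n hn =>
    hP ▸ Submodule.le_orthogonal_orthogonal _ (Submodule.subset_span ⟨n, hn, rfl⟩)
  have hinner : ⟪∑ m, gF m w, p⟫ = ‖p‖ ^ 2 := by
    rw [hp]; exact inner_sum_orthogonalProjectionOnto_sum_compl P (fun m => gF m w) D hD
  have hηMH : η * (Fintype.card (Fin M) * H) ≤ 1 :=
    mul_le_one_of_le_one_div hη.le (by rwa [Fintype.card_fin])
  have hdescent := sum_le_sum_sub_of_smooth (fun m u => hsmooth m u w) hη.le hηMH hinner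
  calc (M : ℝ)⁻¹ * ∑ m, F m (w + η • (-p))
      ≤ (M : ℝ)⁻¹ * (∑ m, F m w - η / 2 * ‖p‖ ^ 2) :=
        mul_le_mul_of_nonneg_left hdescent (by positivity)
    _ = (M : ℝ)⁻¹ * ∑ m, F m w - η / (2 * M) * ‖p‖ ^ 2 := by ring

/-- progress of the ADA-GD projected update in Case 1 (some agents
predicted defecting, some not) when the projected gradient is small. -/
theorem stmt_7 {d M : ℕ} (hM : 0 < M)
    (F : Fin M → EuclideanSpace ℝ (Fin d) → ℝ)
    (gF : Fin M → EuclideanSpace ℝ (Fin d) → EuclideanSpace ℝ (Fin d))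
    (H η : ℝ) (hH : 0 < H) (hη : 0 < η) (hηM : η ≤ 1 / (M * H))
    (hconv : ∀ m u v, F m v + ⟪gF m v, u - v⟫ ≤ F m u)
    (hsmooth : ∀ m u v, F m u ≤ F m v + ⟪gF m v, u - v⟫ + H / 2 * ‖u - v‖ ^ 2)
    (w : EuclideanSpace ℝ (Fin d)) (D : Finset (Fin M))
    (P : Submodule ℝ (EuclideanSpace ℝ (Fin d)))
    (hP : P = (Submodule.span ℝ ((fun n => gF n w) '' (D : Set (Fin M))))ᗮ)
    (p : EuclideanSpace ℝ (Fin d))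
    (hp : p = (Submodule.orthogonalProjectionOnto P (∑ m ∈ Dᶜ, gF m w) : EuclideanSpace ℝ (Fin d)))
    (hp0 : 0 < ‖p‖) (hp1 : ‖p‖ < 1) :
    (M : ℝ)⁻¹ * ∑ m, F m (w + η • (-p)) ≤
      (M : ℝ)⁻¹ * ∑ m, F m w - η / (2 * M) * ‖p‖ ^ 2 :=
  stmt_7_general F gF H η hη hηM hsmooth w D P hP p hp
end
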